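/- arXiv:1410.0502 — 3 statements merged into one kernel-verified Lean document; each statement's English description precedes it below -/
import Mathlib

section
/- If a homomorphism γ : G → U_{n+1}(F_p) from a profinite (or arbitrary) group G has the property that the n superdiagonal coordinate functions γ_{i,i+1} : G → Z/p are surjective and F_p-linearly independent as homomorphisms G → F_p, then γ is surjective. -/
/-!
Let `U = U_{n+1}(𝔽_p)` and `H = γ(G)`. Filter `U` by the subgroups `U_k` of matrices agreeing
with `1` up to the `k`-th superdiagonal. On `U_k` the `(k+1)`-th superdiagonal is additive; hence
`u ∈ U_k` gives `u ^ p ∈ U_{k+1}`, so `U` is a `p`-group, thus nilpotent, and `[U, U]` lies in the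
Frattini subgroup `Φ(U)`. For `k ≥ 1` every elementary matrix `1 + c E_{i,j}` with `j = i + k + 1`
is the commutator of `1 + c E_{i,i+1}` and `1 + E_{i+1,j}`, so `U_k ⊆ [U, U] U_{k+1}`; downward
induction gives `U_1 ⊆ [U, U]`, i.e. the kernel of the superdiagonal map `U → 𝔽_p^n` lies in
`[U, U]`. A functional on `𝔽_p^n` vanishing on the image of `H` is a linear relation between the
coordinates `γ_{i,i+1}`, so by linear independence `H` maps onto `𝔽_p^n`. Hence `H Φ(U) = U`, and
`H = U` because the Frattini subgroup consists of non-generators.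
-/

/-- A square matrix is *unitriangular* if it is upper triangular with all
diagonal entries equal to `1`. -/
def Matrix.IsUnitriangular {m p : ℕ} (M : Matrix (Fin m) (Fin m) (ZMod p)) : Prop :=
  (∀ i, M i i = 1) ∧ ∀ i j, j < i → M i j = 0

lemma Matrix.IsUnitriangular.one {m p : ℕ} :
    Matrix.IsUnitriangular (1 : Matrix (Fin m) (Fin m) (ZMod p)) := by
  constructor
  · intro i; simp
  · intro i j h; exact Matrix.one_apply_ne (ne_of_gt h)

lemma Matrix.IsUnitriangular.mul {m p : ℕ} {A B : Matrix (Fin m) (Fin m) (ZMod p)}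
    (hA : A.IsUnitriangular) (hB : B.IsUnitriangular) : (A * B).IsUnitriangular := by
  constructor
  · intro i
    rw [Matrix.mul_apply]
    rw [Finset.sum_eq_single i]
    · rw [hA.1, hB.1, one_mul]
    · intro k _ hk
      rcases lt_or_gt_of_ne hk with h | h
      · rw [hA.2 i k h, zero_mul]
      · rw [hB.2 k i h, mul_zero]
    · intro h; exact absurd (Finset.mem_univ i) h
  · intro i j hji
    rw [Matrix.mul_apply]
    apply Finset.sum_eq_zero
    intro k _
    rcases lt_or_ge k i with h | h
    · rw [hA.2 i k h, zero_mul]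
    · rw [hB.2 k j (lt_of_lt_of_le hji h), mul_zero]

lemma Matrix.IsUnitriangular.pow {m p : ℕ} {A : Matrix (Fin m) (Fin m) (ZMod p)}
    (hA : A.IsUnitriangular) (k : ℕ) : (A ^ k).IsUnitriangular := by
  induction k with
  | zero => simpa using Matrix.IsUnitriangular.one
  | succ k ih => rw [pow_succ]; exact ih.mul hA

/-- The group `U_m(𝔽_p)` of unipotent upper-triangular `m × m` matrices over `𝔽_p`,
realized as a subgroup of the units of the matrix ring. -/
def unitriangularGroup (m p : ℕ) [Fact p.Prime] :
    Subgroup (Matrix (Fin m) (Fin m) (ZMod p))ˣ where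
  carrier := {u | Matrix.IsUnitriangular u.val}
  one_mem' := Matrix.IsUnitriangular.one
  mul_mem' := fun ha hb => ha.mul hb
  inv_mem' := by
    intro u hu
    have hord : 0 < orderOf u := orderOf_pos u
    have h1 : u ^ orderOf u = 1 := pow_orderOf_eq_one u
    have hinv : u⁻¹ = u ^ (orderOf u - 1) := by
      apply inv_eq_of_mul_eq_one_right
      rw [← pow_succ', Nat.sub_add_cancel hord]
      exact h1
    show Matrix.IsUnitriangular (u⁻¹).val
    rw [hinv]
    rw [Units.val_pow_eq_pow_val]
    exact hu.pow _

open Subgroup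
open scoped commutatorElement

theorem QuotientGroup.isSimpleGroup_of_isCoatom {G : Type*} [Group G] {K : Subgroup G} [K.Normal]
    (hK : IsCoatom K) : IsSimpleGroup (G ⧸ K) := by
  have : Nontrivial (G ⧸ K) := QuotientGroup.nontrivial_iff.mpr hK.1
  refine ⟨fun N _ => ?_⟩
  have hinj := comap_injective (QuotientGroup.mk'_surjective K)
  rcases hK.le_iff.mp (QuotientGroup.le_comap_mk' K N) with h | h
  · exact Or.inr (hinj (by rw [h, comap_top]))
  · exact Or.inl (hinj (by rw [h, MonoidHom.comap_bot, QuotientGroup.ker_mk']))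

theorem commutator_le_frattini (G : Type*) [Group G] [Group.IsNilpotent G] :
    commutator G ≤ frattini G := by
  refine le_iInf₂ fun K hK => ?_
  have : K.Normal := Group.normalizerCondition_of_isNilpotent.normal_of_coatom K hK
  have : IsSimpleGroup (G ⧸ K) := QuotientGroup.isSimpleGroup_of_isCoatom hK
  rw [commutator_def, commutator_le]
  intro g _ h _
  rw [← QuotientGroup.ker_mk' K, MonoidHom.mem_ker, map_commutatorElement]
  exact commutatorElement_eq_one_iff_mul_comm.mpr (mul_comm _ _)

theorem AddMonoidHom.surjective_of_linearIndependent {p : ℕ} [Fact p.Prime] {A ι : Type*}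
    [AddGroup A] [Fintype ι] (f : A →+ (ι → ZMod p))
    (hf : LinearIndependent (ZMod p) (fun i a => f a i)) : Function.Surjective f := by
  classical
  set W := AddSubgroup.toZModSubmodule p f.range
  suffices W = ⊤ from fun v => (this ▸ Submodule.mem_top : v ∈ W)
  rw [← Submodule.dualAnnihilator_eq_bot_iff, Submodule.eq_bot_iff]
  intro φ hφ
  have hφf : ∀ a, φ (f a) = 0 := fun a => (Submodule.mem_dualAnnihilator φ).mp hφ _ ⟨a, rfl⟩
  have hcoeff := Fintype.linearIndependent_iff.mp hf (fun i => φ fun j => if i = j then 1 else 0)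
    (funext fun a => by simpa [LinearMap.pi_apply_eq_sum_univ φ (f a), mul_comm] using hφf a)
  exact LinearMap.ext fun x => by simp [LinearMap.pi_apply_eq_sum_univ φ x, hcoeff]

namespace Matrix

section Transvection

variable {n R : Type*} [Fintype n] [DecidableEq n] [CommRing R] {i j l : n}

theorem transvection_commutator (hij : i ≠ j) (hjl : j ≠ l) (hil : i ≠ l) (a b : R) :
    transvection i j a * transvection j l b * transvection i j (-a) * transvection j l (-b) =
      transvection i l (a * b) := by
  simp only [transvection, mul_add, mul_one, add_mul, one_mul, single_mul_single_same,
    ← single_neg, mul_neg, ne_eq, hij.symm, hjl.symm, hil.symm, not_false_eq_true,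
    single_mul_single_of_ne, add_zero, neg_mul, add_neg_cancel_right]
  abel

def transvectionUnit (h : i ≠ j) (c : R) : (Matrix n n R)ˣ where
  val := transvection i j c
  inv := transvection i j (-c)
  val_inv := by rw [transvection_mul_transvection_same _ _ h, add_neg_cancel, transvection_zero]
  inv_val := by rw [transvection_mul_transvection_same _ _ h, neg_add_cancel, transvection_zero]

theorem commutatorElement_transvectionUnit (hij : i ≠ j) (hjl : j ≠ l) (hil : i ≠ l) (a b : R) :
    ⁅transvectionUnit hij a, transvectionUnit hjl b⁆ = transvectionUnit hil (a * b) :=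
  Units.ext (transvection_commutator hij hjl hil a b)

end Transvection

variable {R : Type*} [CommRing R] {m : ℕ}

def EqOneUpToSuperdiagonal (k : ℕ) (M : Matrix (Fin m) (Fin m) R) : Prop :=
  ∀ i j : Fin m, (j : ℕ) ≤ i + k → M i j = (1 : Matrix (Fin m) (Fin m) R) i j

def superdiagonal (k : ℕ) (M : Matrix (Fin m) (Fin m) R) : Matrix (Fin m) (Fin m) R :=
  of fun i j => if (j : ℕ) = i + k then M i j else 0

variable {k : ℕ} {A B : Matrix (Fin m) (Fin m) R}

theorem eqOneUpToSuperdiagonal_one (k : ℕ) :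
    EqOneUpToSuperdiagonal k (1 : Matrix (Fin m) (Fin m) R) :=
  fun _ _ _ => rfl

theorem superdiagonal_one (hk : k ≠ 0) :
    superdiagonal k (1 : Matrix (Fin m) (Fin m) R) = 0 := by
  ext i j
  simp only [superdiagonal, of_apply, zero_apply, ite_eq_right_iff]
  exact fun h => one_apply_ne (by rintro rfl; omega)

theorem isUnitriangular_iff_eqOneUpToSuperdiagonal_zero {p : ℕ}
    {M : Matrix (Fin m) (Fin m) (ZMod p)} :
    M.IsUnitriangular ↔ EqOneUpToSuperdiagonal 0 M := by
  refine ⟨fun h i j hij => ?_, fun h => ⟨fun i => ?_, fun i j hij => ?_⟩⟩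
  · rcases Nat.lt_or_eq_of_le (show (j : ℕ) ≤ i from hij) with hlt | heq
    · have hji : j < i := hlt
      rw [h.2 i j hji, one_apply_ne (ne_of_gt hji)]
    · rw [Fin.ext heq, h.1, one_apply_eq]
  · rw [h i i (by omega), one_apply_eq]
  · rw [h i j (by have := Fin.lt_def.mp hij; omega), one_apply_ne (ne_of_gt hij)]

theorem eqOneUpToSuperdiagonal_succ_iff :
    EqOneUpToSuperdiagonal (k + 1) A ↔
      EqOneUpToSuperdiagonal k A ∧ superdiagonal (k + 1) A = 0 := by
  refine ⟨fun h => ⟨fun i j hij => h i j (by omega), ?_⟩, fun ⟨h, hs⟩ i j hij => ?_⟩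
  · ext i j
    simp only [superdiagonal, of_apply, zero_apply, ite_eq_right_iff]
    exact fun hij => (h i j hij.le).trans (one_apply_ne (by rintro rfl; omega))
  · rcases Nat.lt_or_eq_of_le hij with hlt | heq
    · exact h i j (by omega)
    · have := congrFun (congrFun hs i) j
      simp only [superdiagonal, of_apply, zero_apply, heq, if_true] at this
      rw [this, one_apply_ne (by rintro rfl; omega)]

theorem eqOneUpToSuperdiagonal_transvection {i j : Fin m} (h : (i : ℕ) + k < j) (c : R) :
    EqOneUpToSuperdiagonal k (transvection i j c) := by
  intro a b hab
  simp only [transvection, add_apply, single_apply, add_eq_left, ite_eq_right_iff]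
  rintro ⟨rfl, rfl⟩
  omega

theorem superdiagonal_transvection {i j : Fin m} (h : (j : ℕ) = i + k + 1) (c : R) :
    superdiagonal (k + 1) (transvection i j c) = single i j c := by
  ext a b
  simp only [superdiagonal, of_apply, transvection, add_apply, single_apply]
  split_ifs with hab hij hij
  · rw [one_apply_ne (by rintro rfl; omega), zero_add]
  · rw [one_apply_ne (by rintro rfl; omega), add_zero]
  · obtain ⟨rfl, rfl⟩ := hij
    omega
  · rfl

namespace EqOneUpToSuperdiagonal

variable (hA : EqOneUpToSuperdiagonal k A) (hB : EqOneUpToSuperdiagonal k B)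
include hA hB

theorem mul_apply_of_le {i j : Fin m} (hij : (j : ℕ) ≤ i + k + 1) :
    (A * B) i j = A i j + B i j - (1 : Matrix (Fin m) (Fin m) R) i j := by
  have key : ∀ x, A i x * B x j = (1 : Matrix _ _ R) i x * B x j + A i x * (1 : Matrix _ _ R) x j
      - (1 : Matrix _ _ R) i x * (1 : Matrix _ _ R) x j := by
    intro x
    rcases le_or_gt (x : ℕ) (i + k) with hx | hx
    · rw [hA i x hx]; ring
    · rw [hB x j (by omega)]; ring
  rw [mul_apply, Finset.sum_congr rfl fun x _ => key x, Finset.sum_sub_distrib,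
    Finset.sum_add_distrib, ← mul_apply, ← mul_apply, ← mul_apply, one_mul, mul_one, mul_one,
    add_comm (B i j)]

theorem mul : EqOneUpToSuperdiagonal k (A * B) := fun i j hij => by
  rw [hA.mul_apply_of_le hB (by omega), hA i j hij, hB i j hij, add_sub_cancel_right]

theorem superdiagonal_mul :
    superdiagonal (k + 1) (A * B) = superdiagonal (k + 1) A + superdiagonal (k + 1) B := by
  ext i j
  simp only [superdiagonal, of_apply, add_apply]
  split_ifs with h
  · rw [hA.mul_apply_of_le hB h.le, one_apply_ne (by rintro rfl; omega), sub_zero]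
  · rw [add_zero]

end EqOneUpToSuperdiagonal

variable (R m) in
/-- Recording the condition on the inverse spares proving that inverses of unitriangular
matrices are unitriangular. -/
def unitriangularFiltration (k : ℕ) : Subgroup (Matrix (Fin m) (Fin m) R)ˣ where
  carrier := {u | EqOneUpToSuperdiagonal k u.val ∧ EqOneUpToSuperdiagonal k u⁻¹.val}
  one_mem' := ⟨eqOneUpToSuperdiagonal_one k, eqOneUpToSuperdiagonal_one k⟩
  mul_mem' := fun hu hv => ⟨hu.1.mul hv.1, by rw [_root_.mul_inv_rev]; exact hv.2.mul hu.2⟩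
  inv_mem' := fun hu => ⟨hu.2, by rw [_root_.inv_inv]; exact hu.1⟩

local notation "𝒰" => unitriangularFiltration R m

variable {u v : (Matrix (Fin m) (Fin m) R)ˣ}

theorem superdiagonal_inv (hu : u ∈ 𝒰 k) :
    superdiagonal (k + 1) u⁻¹.val = -superdiagonal (k + 1) u.val := by
  rw [eq_neg_iff_add_eq_zero, ← hu.2.superdiagonal_mul hu.1, ← Units.val_mul, inv_mul_cancel,
    Units.val_one, superdiagonal_one k.succ_ne_zero]

theorem mem_unitriangularFiltration_succ (hu : u ∈ 𝒰 k)
    (h : superdiagonal (k + 1) u.val = 0) : u ∈ 𝒰 (k + 1) :=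
  ⟨eqOneUpToSuperdiagonal_succ_iff.mpr ⟨hu.1, h⟩,
    eqOneUpToSuperdiagonal_succ_iff.mpr ⟨hu.2, by rw [superdiagonal_inv hu, h, neg_zero]⟩⟩

theorem inv_mul_mem_unitriangularFiltration_succ (hu : u ∈ 𝒰 k) (hv : v ∈ 𝒰 k)
    (h : superdiagonal (k + 1) u.val = superdiagonal (k + 1) v.val) : u⁻¹ * v ∈ 𝒰 (k + 1) := by
  refine mem_unitriangularFiltration_succ (mul_mem (inv_mem hu) hv) ?_
  rw [Units.val_mul, hu.2.superdiagonal_mul hv.1, superdiagonal_inv hu, h, neg_add_cancel]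

theorem superdiagonal_pow (hu : u ∈ 𝒰 k) (r : ℕ) :
    superdiagonal (k + 1) (u ^ r).val = r • superdiagonal (k + 1) u.val := by
  induction r with
  | zero => simp [superdiagonal_one k.succ_ne_zero]
  | succ r ih =>
    rw [pow_succ, Units.val_mul, (pow_mem hu r).1.superdiagonal_mul hu.1, ih, succ_nsmul]

theorem pow_char_mem_unitriangularFiltration_succ (p : ℕ) [CharP R p] (hu : u ∈ 𝒰 k) :
    u ^ p ∈ 𝒰 (k + 1) := by
  refine mem_unitriangularFiltration_succ (pow_mem hu p) ?_
  rw [superdiagonal_pow hu, ← Nat.cast_smul_eq_nsmul R, CharP.cast_eq_zero, zero_smul]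

theorem unitriangularFiltration_eq_bot (h : m ≤ k) : 𝒰 k = ⊥ := by
  refine eq_bot_iff.mpr fun u hu => Units.ext ?_
  ext i j
  exact hu.1 i j (by omega)

theorem pow_char_pow_eq_one (p : ℕ) [CharP R p] (hu : u ∈ 𝒰 0) : u ^ p ^ m = 1 := by
  suffices ∀ k, u ^ p ^ k ∈ 𝒰 k by
    simpa [unitriangularFiltration_eq_bot le_rfl] using this m
  intro k
  induction k with
  | zero => simpa using hu
  | succ k ih => rw [pow_succ, pow_mul]; exact pow_char_mem_unitriangularFiltration_succ p ih

theorem transvectionUnit_mem {i j : Fin m} (h : (i : ℕ) + k < j) (c : R) :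
    transvectionUnit (show i ≠ j by rintro rfl; omega) c ∈ 𝒰 k :=
  ⟨eqOneUpToSuperdiagonal_transvection h c, eqOneUpToSuperdiagonal_transvection h (-c)⟩

theorem transvectionUnit_mem_commutator {i j : Fin m} (h : (i : ℕ) + 1 < j) (c : R) :
    transvectionUnit (show i ≠ j by rintro rfl; omega) c ∈ ⁅𝒰 0, 𝒰 0⁆ := by
  let l : Fin m := ⟨i + 1, by omega⟩
  have := commutator_mem_commutator
    (transvectionUnit_mem (k := 0) (i := i) (j := l) (by simp [l]) c)
    (transvectionUnit_mem (k := 0) (i := l) (j := j) (by simp [l]; omega) 1)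
  rwa [commutatorElement_transvectionUnit, mul_one] at this

theorem exists_mem_commutator_superdiagonal_eq (hk : 1 ≤ k) (X : Matrix (Fin m) (Fin m) R) :
    ∃ v ∈ ⁅𝒰 0, 𝒰 0⁆ ⊓ 𝒰 k, superdiagonal (k + 1) v.val = superdiagonal (k + 1) X := by
  set S := superdiagonal (k + 1) X
  have single_mem : ∀ a b : Fin m,
      ∃ v ∈ ⁅𝒰 0, 𝒰 0⁆ ⊓ 𝒰 k, superdiagonal (k + 1) v.val = single a b (S a b) := by
    intro a b
    by_cases hab : (b : ℕ) = a + k + 1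
    · refine ⟨transvectionUnit (i := a) (j := b) (by rintro rfl; omega) (X a b),
        ⟨transvectionUnit_mem_commutator (by omega) _, transvectionUnit_mem (by omega) _⟩, ?_⟩
      rw [transvectionUnit, superdiagonal_transvection hab]
      simp [S, superdiagonal, hab, add_assoc]
    · refine ⟨1, one_mem _, ?_⟩
      rw [Units.val_one, superdiagonal_one k.succ_ne_zero]
      simp [S, superdiagonal, ← add_assoc, hab]
  have sum_mem : ∀ s : Finset (Fin m × Fin m), ∃ v ∈ ⁅𝒰 0, 𝒰 0⁆ ⊓ 𝒰 k,
      superdiagonal (k + 1) v.val = ∑ q ∈ s, single q.1 q.2 (S q.1 q.2) := by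
    intro s
    induction s using Finset.induction_on with
    | empty => exact ⟨1, one_mem _, by simp [superdiagonal_one]⟩
    | insert q s hq ih =>
      obtain ⟨v, hv, hvS⟩ := ih
      obtain ⟨w, hw, hwS⟩ := single_mem q.1 q.2
      refine ⟨w * v, mul_mem hw hv, ?_⟩
      rw [Finset.sum_insert hq, Units.val_mul, hw.2.1.superdiagonal_mul hv.2.1, hwS, hvS]
  obtain ⟨v, hv, hvS⟩ := sum_mem Finset.univ
  rw [Fintype.sum_prod_type] at hvS
  exact ⟨v, hv, hvS.trans (matrix_eq_sum_single S).symm⟩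

theorem unitriangularFiltration_le_commutator (hk : 1 ≤ k) : 𝒰 k ≤ ⁅𝒰 0, 𝒰 0⁆ := by
  obtain ⟨d, hd⟩ : ∃ d, m ≤ k + d := ⟨m, by omega⟩
  induction d generalizing k with
  | zero => rw [unitriangularFiltration_eq_bot (by omega)]; exact bot_le
  | succ d ih =>
    intro u hu
    obtain ⟨v, ⟨hvC, hvk⟩, hv⟩ := exists_mem_commutator_superdiagonal_eq hk u.val
    have := ih (by omega) (by omega) (inv_mul_mem_unitriangularFiltration_succ hvk hu hv)
    simpa using mul_mem hvC this

end Matrix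

theorem unitriangularGroup_eq_unitriangularFiltration (m p : ℕ) [Fact p.Prime] :
    unitriangularGroup m p = Matrix.unitriangularFiltration (ZMod p) m 0 := by
  ext u
  refine ⟨fun h => ⟨?_, ?_⟩, fun h => ?_⟩
  · exact Matrix.isUnitriangular_iff_eqOneUpToSuperdiagonal_zero.mp h
  · exact Matrix.isUnitriangular_iff_eqOneUpToSuperdiagonal_zero.mp (inv_mem h)
  · exact Matrix.isUnitriangular_iff_eqOneUpToSuperdiagonal_zero.mpr h.1

instance unitriangularGroup.isNilpotent (m p : ℕ) [Fact p.Prime] :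
    Group.IsNilpotent (unitriangularGroup m p) :=
  IsPGroup.isNilpotent (p := p) fun u => ⟨m, Subtype.ext <| Matrix.pow_char_pow_eq_one p
    ((unitriangularGroup_eq_unitriangularFiltration m p).le u.2)⟩

namespace unitriangularGroup

variable (n p : ℕ) [Fact p.Prime]

def superdiagonalHom : unitriangularGroup (n + 1) p →* Multiplicative (Fin n → ZMod p) where
  toFun u := Multiplicative.ofAdd fun i => u.val.val i.castSucc i.succ
  map_one' := by
    ext i
    exact Matrix.one_apply_ne Fin.castSucc_lt_succ.ne
  map_mul' u v := by
    ext i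
    have hu := Matrix.isUnitriangular_iff_eqOneUpToSuperdiagonal_zero.mp u.2
    have hv := Matrix.isUnitriangular_iff_eqOneUpToSuperdiagonal_zero.mp v.2
    show (u.val.val * v.val.val) i.castSucc i.succ =
      u.val.val i.castSucc i.succ + v.val.val i.castSucc i.succ
    rw [hu.mul_apply_of_le hv (by simp), Matrix.one_apply_ne Fin.castSucc_lt_succ.ne, sub_zero]

theorem ker_superdiagonalHom_le_commutator :
    (superdiagonalHom n p).ker ≤ commutator (unitriangularGroup (n + 1) p) := by
  intro u hu
  have hsd : Matrix.superdiagonal 1 u.val.val = 0 := by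
    ext a b
    simp only [Matrix.superdiagonal, Matrix.of_apply, Matrix.zero_apply, ite_eq_right_iff]
    intro hab
    obtain ⟨i, rfl, rfl⟩ : ∃ i : Fin n, i.castSucc = a ∧ i.succ = b :=
      ⟨⟨a, by omega⟩, rfl, Fin.ext (by simp [hab])⟩
    exact congrFun (congrArg Multiplicative.toAdd (MonoidHom.mem_ker.mp hu)) i
  have hu1 := Matrix.mem_unitriangularFiltration_succ
    ((unitriangularGroup_eq_unitriangularFiltration (n + 1) p).le u.2) hsd
  have hC := Matrix.unitriangularFiltration_le_commutator le_rfl hu1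
  rw [← unitriangularGroup_eq_unitriangularFiltration, ← Subgroup.map_subtype_commutator] at hC
  obtain ⟨w, hw, hwu⟩ := hC
  exact Subtype.ext hwu ▸ hw

end unitriangularGroup

theorem surjective_of_superdiagonal_general (p n : ℕ) [Fact p.Prime]
    (G : Type*) [Group G] (γ : G →* unitriangularGroup (n + 1) p)
    (hli : LinearIndependent (ZMod p) (fun i : Fin n =>
      (fun σ : G => ((γ σ : (Matrix (Fin (n + 1)) (Fin (n + 1)) (ZMod p))ˣ) :
        Matrix (Fin (n + 1)) (Fin (n + 1)) (ZMod p)) i.castSucc i.succ : G → ZMod p))) :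
    Function.Surjective γ := by
  set Φ := unitriangularGroup.superdiagonalHom n p
  have hΦγ :=
    AddMonoidHom.surjective_of_linearIndependent (MonoidHom.toAdditiveLeft (Φ.comp γ)) hli
  rw [← MonoidHom.range_eq_top]
  refine frattini_nongenerating (top_unique fun u _ => ?_)
  obtain ⟨σ, hσ⟩ := hΦγ (Multiplicative.toAdd (Φ u))
  have hker : (γ σ)⁻¹ * u ∈ Φ.ker := by
    rw [MonoidHom.mem_ker, map_mul, map_inv, inv_mul_eq_one]
    exact hσ
  have := commutator_le_frattini _ (unitriangularGroup.ker_superdiagonalHom_le_commutator n p hker)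
  simpa using mul_mem_sup (γ.mem_range.mpr ⟨σ, rfl⟩) this

/-- If a homomorphism `γ : G → U_{n+1}(𝔽_p)` has the property that the
`n` superdiagonal coordinate functions `γ_{i,i+1} : G → ℤ/p` are surjective and
`𝔽_p`-linearly independent as homomorphisms `G → 𝔽_p`, then `γ` is surjective. -/
theorem surjective_of_superdiagonal (p n : ℕ) [Fact p.Prime] (hn : 2 ≤ n)
    (G : Type*) [Group G] (γ : G →* unitriangularGroup (n + 1) p)
    (hsurj : ∀ i : Fin n, Function.Surjective
      (fun σ : G => ((γ σ : (Matrix (Fin (n + 1)) (Fin (n + 1)) (ZMod p))ˣ) :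
        Matrix (Fin (n + 1)) (Fin (n + 1)) (ZMod p)) i.castSucc i.succ))
    (hli : LinearIndependent (ZMod p) (fun i : Fin n =>
      (fun σ : G => ((γ σ : (Matrix (Fin (n + 1)) (Fin (n + 1)) (ZMod p))ˣ) :
        Matrix (Fin (n + 1)) (Fin (n + 1)) (ZMod p)) i.castSucc i.succ : G → ZMod p))) :
    Function.Surjective γ :=
  surjective_of_superdiagonal_general p n G γ hli
end

section
/- Let G be a profinite group and χ_1, …, χ_r, μ_1, …, μ_s ∈ H^1(G, Z/p) with ∩_i ker(χ_i) = ∩_j ker(μ_j). Then Σ_{i=1}^r χ_i ∪ H^1(G, Z/p) = Σ_{j=1}^s μ_j ∪ H^1(G, Z/p) as subgroups of H^2(G, Z/p); consequently, the cup product–restriction property (exactness of H^1(G)^{⊗r} → H^2(G) → H^2(K)) holds for χ_1,…,χ_r if and only if it holds for μ_1,…,μ_s. -/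
/-!
If `∩ ker χᵢ ⊆ ker μ`, then `μ` is a `ℤ/p`-linear combination `Σᵢ cᵢ χᵢ`: extend all characters
linearly to the free `ℤ/p`-module on `G`, where a formal combination is evaluated by every
character like a single group element, and apply the corresponding fact for linear forms on a
vector space. Bilinearity of the cup product then gives `μ ∪ φ = Σᵢ χᵢ ∪ cᵢφ`, so both images of
`Λ` coincide, and the cup product–restriction property sees the characters only through this
image and `K`.
-/

section ContinuousCochains

variable (p : ℕ) (G : Type*) [Group G] [TopologicalSpace G] [IsTopologicalGroup G]

/-- Continuous (= locally constant) 1-cochains on `G` with values in `ℤ/p`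
(trivial action). -/
abbrev Cochain1 := LocallyConstant G (ZMod p)

/-- Continuous (= locally constant) 2-cochains on `G` with values in `ℤ/p`
(trivial action). -/
abbrev Cochain2 := LocallyConstant (G × G) (ZMod p)

variable {G}

/-- A continuous 1-cochain is a 1-cocycle (for the trivial action) iff it is a
group homomorphism `G → ℤ/p`. -/
def IsHom1 (χ : Cochain1 p G) : Prop := ∀ g h : G, χ (g * h) = χ g + χ h

/-- The 2-cocycle condition (trivial action, inhomogeneous cochains). -/
def IsCocycle2 (f : Cochain2 p G) : Prop :=
  ∀ g h k : G, f (h, k) - f (g * h, k) + f (g, h * k) - f (g, h) = 0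

/-- The differential `∂ : C¹ → C²`, `(∂c)(σ, τ) = c σ − c (στ) + c τ`. -/
def d1 (c : Cochain1 p G) : Cochain2 p G :=
  c.comap ⟨Prod.fst, continuous_fst⟩ - c.comap ⟨fun x : G × G => x.1 * x.2, continuous_mul⟩
    + c.comap ⟨Prod.snd, continuous_snd⟩

/-- The cup product of two continuous 1-cochains:
`(χ ⌣ φ)(σ, τ) = χ σ · φ τ`. -/
def cup (χ φ : Cochain1 p G) : Cochain2 p G :=
  χ.comap ⟨Prod.fst, continuous_fst⟩ * φ.comap ⟨Prod.snd, continuous_snd⟩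

/-- Restriction of a continuous 2-cochain to a (closed) subgroup `K ≤ G`. -/
def res2 (K : Subgroup G) (f : Cochain2 p G) : Cochain2 p K :=
  f.comap ⟨fun x : K × K => ((x.1 : G), (x.2 : G)),
    (continuous_subtype_val.comp continuous_fst).prodMk
      (continuous_subtype_val.comp continuous_snd)⟩

/-- The kernel of a continuous homomorphism `χ : G → ℤ/p`, as a subgroup of `G`. -/
def homKer (χ : Cochain1 p G) (hχ : IsHom1 p χ) : Subgroup G where
  carrier := {g | χ g = 0}
  one_mem' := by
    have h := hχ 1 1
    rw [mul_one] at h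
    exact (left_eq_add.mp h)
  mul_mem' := by
    intro a b ha hb
    have : χ (a * b) = χ a + χ b := hχ a b
    simp only [Set.mem_setOf_eq] at ha hb ⊢
    rw [this, ha, hb, add_zero]
  inv_mem' := by
    intro a ha
    simp only [Set.mem_setOf_eq] at ha ⊢
    have h1 : χ 1 = 0 := by
      have h := hχ 1 1
      rw [mul_one] at h
      exact (left_eq_add.mp h)
    have h := hχ a a⁻¹
    rw [mul_inv_cancel, h1, ha, zero_add] at h
    exact h.symm

end ContinuousCochains

section CupRes

variable (p : ℕ) {G : Type*} [Group G] [TopologicalSpace G] [IsTopologicalGroup G]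

/-- The *cup product–restriction property* for continuous characters
`χ₁, …, χᵣ : G → ℤ/p` with respect to a subgroup `K`: the sequence
`H¹(G)^{⊗r} → H²(G) → H²(K)` is exact, expressed at the level of continuous
cocycles. -/
def CupResProperty (r : ℕ) (χ : Fin r → Cochain1 p G) (K : Subgroup G) : Prop :=
  ∀ α : Cochain2 p G, IsCocycle2 p α →
    ((∃ b : Cochain1 p K, res2 p K α = d1 p b) ↔
      ∃ φ : Fin r → Cochain1 p G, (∀ i, IsHom1 p (φ i)) ∧
        ∃ b : Cochain1 p G, α = (∑ i, cup p (χ i) (φ i)) + d1 p b)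

end CupRes

open Finsupp LinearMap

theorem LocallyConstant.finset_sum_apply {X Y ι : Type*} [TopologicalSpace X] [AddCommMonoid Y]
    (s : Finset ι) (f : ι → LocallyConstant X Y) (x : X) :
    (∑ i ∈ s, f i) x = ∑ i ∈ s, f i x :=
  map_sum (LocallyConstant.evalAddMonoidHom x) f s

section Cup

variable {p : ℕ} {G : Type*} [TopologicalSpace G]

theorem cup_apply (χ φ : Cochain1 p G) (x : G × G) : cup p χ φ x = χ x.1 * φ x.2 := rfl

theorem sum_cup_eq_sum_cup {ι κ : Type*} [Fintype ι] [Fintype κ] {χ : ι → Cochain1 p G}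
    {μ : κ → Cochain1 p G} {c : ι → κ → ZMod p} (hc : ∀ i g, χ i g = ∑ j, c i j * μ j g)
    (φ : ι → Cochain1 p G) :
    ∑ i, cup p (χ i) (φ i) = ∑ j, cup p (μ j) (∑ i, c i j • φ i) := by
  ext x
  simp only [LocallyConstant.finset_sum_apply, cup_apply, hc, LocallyConstant.smul_apply,
    smul_eq_mul, Finset.sum_mul, Finset.mul_sum]
  rw [Finset.sum_comm]
  exact Finset.sum_congr rfl fun j _ => Finset.sum_congr rfl fun i _ => by ring

end Cup

section Characters

variable {p : ℕ} {G : Type*} [Group G] [TopologicalSpace G]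

theorem IsHom1.map_pow {χ : Cochain1 p G} (hχ : IsHom1 p χ) (g : G) (n : ℕ) :
    χ (g ^ n) = n * χ g := by
  induction n with
  | zero => simpa using hχ 1 1
  | succ n ih => rw [pow_succ, hχ, ih]; push_cast; ring

theorem isHom1_sum_smul {ι : Type*} [Fintype ι] (c : ι → ZMod p) {φ : ι → Cochain1 p G}
    (hφ : ∀ i, IsHom1 p (φ i)) : IsHom1 p (∑ i, c i • φ i) := fun g h => by
  simp [LocallyConstant.finset_sum_apply, hφ _ g h, mul_add, Finset.sum_add_distrib]

theorem mem_iInf_homKer {ι : Type*} {χ : ι → Cochain1 p G} (hχ : ∀ i, IsHom1 p (χ i)) (g : G) :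
    g ∈ ⨅ i, homKer p (χ i) (hχ i) ↔ ∀ i, χ i g = 0 :=
  Subgroup.mem_iInf

theorem exists_forall_linearCombination_eq [NeZero p] (x : G →₀ ZMod p) :
    ∃ g : G, ∀ χ : Cochain1 p G, IsHom1 p χ → linearCombination (ZMod p) χ x = χ g := by
  induction x using Finsupp.induction with
  | zero => exact ⟨1, fun χ hχ => by simpa [eq_comm] using hχ 1 1⟩
  | single_add a c x _ _ ih =>
    obtain ⟨g, hg⟩ := ih
    refine ⟨a ^ c.val * g, fun χ hχ => ?_⟩
    rw [map_add, linearCombination_single, hg χ hχ, hχ, hχ.map_pow, ZMod.natCast_zmod_val,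
      smul_eq_mul]

theorem IsHom1.exists_eq_sum_of_forall_eq_zero [Fact p.Prime] {ι : Type*} [Fintype ι]
    {χ : Cochain1 p G} (hχ : IsHom1 p χ) {μ : ι → Cochain1 p G} (hμ : ∀ j, IsHom1 p (μ j))
    (h : ∀ g, (∀ j, μ j g = 0) → χ g = 0) :
    ∃ c : ι → ZMod p, ∀ g, χ g = ∑ j, c j * μ j g := by
  have hker : ⨅ j, ker (linearCombination (ZMod p) (μ j)) ≤
      ker (linearCombination (ZMod p) χ) := by
    intro x hx
    obtain ⟨g, hg⟩ := exists_forall_linearCombination_eq x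
    simp only [Submodule.mem_iInf, mem_ker, hg _ hχ, hg _ (hμ _)] at hx ⊢
    exact h g hx
  obtain ⟨c, hc⟩ :=
    (Submodule.mem_span_range_iff_exists_fun _).1 (mem_span_of_iInf_ker_le_ker hker)
  exact ⟨c, fun g => by simpa using (LinearMap.congr_fun hc (single g 1)).symm⟩

end Characters

section CupImage

variable (p : ℕ) {G : Type*} [Group G] [TopologicalSpace G] [IsTopologicalGroup G]

/-- `α` represents a class in `Σᵢ χᵢ ∪ H¹(G, ℤ/p)`. -/
def MemCupImage {ι : Type*} [Fintype ι] (χ : ι → Cochain1 p G) (α : Cochain2 p G) : Prop :=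
  ∃ φ : ι → Cochain1 p G, (∀ i, IsHom1 p (φ i)) ∧
    ∃ b : Cochain1 p G, α = (∑ i, cup p (χ i) (φ i)) + d1 p b

variable {p}

theorem MemCupImage.of_forall_eq_zero [Fact p.Prime] {ι κ : Type*} [Fintype ι] [Fintype κ]
    {χ : ι → Cochain1 p G} (hχ : ∀ i, IsHom1 p (χ i))
    {μ : κ → Cochain1 p G} (hμ : ∀ j, IsHom1 p (μ j))
    (h : ∀ i g, (∀ j, μ j g = 0) → χ i g = 0) {α : Cochain2 p G} :
    MemCupImage p χ α → MemCupImage p μ α := by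
  rintro ⟨φ, hφ, b, rfl⟩
  choose c hc using fun i => (hχ i).exists_eq_sum_of_forall_eq_zero hμ (h i)
  exact ⟨fun j => ∑ i, c i j • φ i, fun j => isHom1_sum_smul _ hφ, b,
    by rw [sum_cup_eq_sum_cup hc]⟩

end CupImage

theorem cupRes_depends_only_on_ker_general (p : ℕ) [Fact p.Prime]
    (G : Type*) [Group G] [TopologicalSpace G] [IsTopologicalGroup G]
    (r s : ℕ) (χ : Fin r → Cochain1 p G) (μ : Fin s → Cochain1 p G)
    (hχ : ∀ i, IsHom1 p (χ i)) (hμ : ∀ j, IsHom1 p (μ j))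
    (K : Subgroup G)
    (hKχ : K = ⨅ i, homKer p (χ i) (hχ i))
    (hKμ : K = ⨅ j, homKer p (μ j) (hμ j)) :
    -- the images of the two maps `Λ` agree (as subgroups of `H²(G)`) …
    (∀ α : Cochain2 p G, IsCocycle2 p α →
      ((∃ φ : Fin r → Cochain1 p G, (∀ i, IsHom1 p (φ i)) ∧
          ∃ b : Cochain1 p G, α = (∑ i, cup p (χ i) (φ i)) + d1 p b) ↔
        (∃ ψ : Fin s → Cochain1 p G, (∀ j, IsHom1 p (ψ j)) ∧
          ∃ b : Cochain1 p G, α = (∑ j, cup p (μ j) (ψ j)) + d1 p b))) ∧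
    -- … and consequently the two cup product–restriction properties are equivalent
    (CupResProperty p r χ K ↔ CupResProperty p s μ K) := by
  have hker : ∀ g, (∀ i, χ i g = 0) ↔ ∀ j, μ j g = 0 := fun g => by
    rw [← mem_iInf_homKer hχ, ← mem_iInf_homKer hμ, ← hKχ, ← hKμ]
  have himage : ∀ α, MemCupImage p χ α ↔ MemCupImage p μ α := fun α =>
    ⟨MemCupImage.of_forall_eq_zero hχ hμ fun i g hg => (hker g).2 hg i,
      MemCupImage.of_forall_eq_zero hμ hχ fun j g hg => (hker g).1 hg j⟩
  exact ⟨fun α _ => himage α, forall₂_congr fun α _ => iff_congr Iff.rfl (himage α)⟩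

/-- Let `G` be a profinite group and `χ₁, …, χᵣ, μ₁, …, μₛ` continuous
homomorphisms `G → ℤ/p` with `∩ ker χᵢ = ∩ ker μⱼ =: K`.  Then
`Σᵢ χᵢ ∪ H¹(G) = Σⱼ μⱼ ∪ H¹(G)` as subgroups of `H²(G)`; consequently the cup
product–restriction property holds for `χ₁, …, χᵣ` iff it holds for `μ₁, …, μₛ`. -/
theorem cupRes_depends_only_on_ker (p : ℕ) [Fact p.Prime]
    (G : Type*) [Group G] [TopologicalSpace G] [IsTopologicalGroup G]
    [CompactSpace G] [TotallyDisconnectedSpace G] [T2Space G]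
    (r s : ℕ) (χ : Fin r → Cochain1 p G) (μ : Fin s → Cochain1 p G)
    (hχ : ∀ i, IsHom1 p (χ i)) (hμ : ∀ j, IsHom1 p (μ j))
    (K : Subgroup G)
    (hKχ : K = ⨅ i, homKer p (χ i) (hχ i))
    (hKμ : K = ⨅ j, homKer p (μ j) (hμ j)) :
    -- the images of the two maps `Λ` agree (as subgroups of `H²(G)`) …
    (∀ α : Cochain2 p G, IsCocycle2 p α →
      ((∃ φ : Fin r → Cochain1 p G, (∀ i, IsHom1 p (φ i)) ∧
          ∃ b : Cochain1 p G, α = (∑ i, cup p (χ i) (φ i)) + d1 p b) ↔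
        (∃ ψ : Fin s → Cochain1 p G, (∀ j, IsHom1 p (ψ j)) ∧
          ∃ b : Cochain1 p G, α = (∑ j, cup p (μ j) (ψ j)) + d1 p b))) ∧
    -- … and consequently the two cup product–restriction properties are equivalent
    (CupResProperty p r χ K ↔ CupResProperty p s μ K) :=
  cupRes_depends_only_on_ker_general p G r s χ μ hχ hμ K hKχ hKμ
end

section
/- Given an array (c_{ij})_{1≤i≤j≤n} of continuous 1-cochains on a profinite group G with values in Z/p, define γ : G → U_{n+1}(F_p) by γ(σ)_{i,j} = (−1)^{j−i} c_{i,j−1}(σ) for 1 ≤ i < j ≤ n+1 (and 1's on the diagonal). Then γ is a group homomorphism if and only if ∂c_{ij} = −Σ_{r=i}^{j−1} c_{ir} c_{r+1,j} for all 1 ≤ i ≤ j ≤ n. -/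
/-! Write `γ σ = 1 + N σ` with `N σ` strictly upper triangular. Then
`γ σ * γ τ = 1 + N σ + N τ + N σ * N τ`, and the `(i, j)` entry of `N σ * N τ` is a sum over
`i < k < j` whose signs `(-1)^(k-i) (-1)^(j-k)` all equal the sign `(-1)^(j-i)` of the `(i, j)`
entries. Comparing entries above the diagonal and cancelling that sign leaves
`c_{ij}(στ) = c_{ij}(σ) + c_{ij}(τ) + Σ_r c_{ir}(σ) c_{r+1,j}(τ)`, which is the identity
`∂c_{ij} = -Σ_r c_{ir} ⌣ c_{r+1,j}` evaluated at `(σ, τ)`. -/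

section StrictUpper

variable {R : Type*}

def strictUpper [Zero R] (m : ℕ) (x : ℕ → ℕ → R) : Matrix (Fin m) (Fin m) R :=
  Matrix.of fun i j => if (i : ℕ) < j then x i j else 0

def strictConv [AddCommMonoid R] [Mul R] (x y : ℕ → ℕ → R) (i j : ℕ) : R :=
  ∑ k ∈ Finset.Ioo i j, x i k * y k j

variable {m : ℕ}

lemma strictUpper_add [AddZeroClass R] (x y : ℕ → ℕ → R) :
    strictUpper m (x + y) = strictUpper m x + strictUpper m y := by
  ext i j
  simp only [strictUpper, Matrix.of_apply, Matrix.add_apply, Pi.add_apply]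
  split_ifs <;> simp

lemma strictUpper_mul [NonUnitalNonAssocSemiring R] (x y : ℕ → ℕ → R) :
    strictUpper m x * strictUpper m y = strictUpper m (strictConv x y) := by
  ext i j
  simp only [Matrix.mul_apply, strictUpper, Matrix.of_apply, strictConv, mul_ite, ite_mul,
    zero_mul, mul_zero]
  rw [Fin.sum_univ_eq_sum_range (fun k => if k < (j : ℕ) then
    if (i : ℕ) < k then x i k * y k j else 0 else 0)]
  split_ifs with hij
  · refine (Finset.sum_subset (fun k hk => ?_) (fun k _ hk => ?_)).symm.trans
      (Finset.sum_congr rfl fun k hk => ?_)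
    · simp only [Finset.mem_Ioo, Finset.mem_range] at hk ⊢; omega
    · simp only [Finset.mem_Ioo, not_and] at hk
      split_ifs <;> simp_all
    · simp only [Finset.mem_Ioo] at hk
      rw [if_pos hk.2, if_pos hk.1]
  · refine Finset.sum_eq_zero fun k _ => ?_
    split_ifs <;> first | rfl | omega

lemma strictUpper_eq_iff [Zero R] {x y : ℕ → ℕ → R} :
    strictUpper m x = strictUpper m y ↔ ∀ i j : Fin m, (i : ℕ) < j → x i j = y i j := by
  simp only [← Matrix.ext_iff, strictUpper, Matrix.of_apply]
  refine forall₂_congr fun i j => ?_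
  by_cases hij : (i : ℕ) < j <;> simp [hij]

lemma one_add_strictUpper_mul_one_add_strictUpper [NonAssocSemiring R] (x y : ℕ → ℕ → R) :
    (1 + strictUpper m x) * (1 + strictUpper m y) =
      1 + strictUpper m (x + y + strictConv x y) := by
  rw [strictUpper_add, strictUpper_add, ← strictUpper_mul, mul_add, add_mul, add_mul, one_mul,
    mul_one, one_mul]
  abel

end StrictUpper

section SignTwist

variable {R : Type*} [Ring R]

def signTwist (x : ℕ → ℕ → R) (i j : ℕ) : R := (-1) ^ (j - i) * x i j

lemma signTwist_add (x y : ℕ → ℕ → R) : signTwist (x + y) = signTwist x + signTwist y := by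
  ext i j
  simp only [signTwist, Pi.add_apply, mul_add]

lemma strictConv_signTwist (x y : ℕ → ℕ → R) :
    strictConv (signTwist x) (signTwist y) = signTwist (strictConv x y) := by
  ext i j
  simp only [strictConv, signTwist, Finset.mul_sum]
  refine Finset.sum_congr rfl fun k hk => ?_
  obtain ⟨hik, hkj⟩ := Finset.mem_Ioo.mp hk
  have hcomm : Commute (x i k) ((-1 : R) ^ (j - k)) := (Commute.neg_one_right _).pow_right _
  rw [show j - i = (k - i) + (j - k) by omega, pow_add, mul_assoc, ← mul_assoc (x i k), hcomm.eq]
  simp only [mul_assoc]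

lemma signTwist_apply_eq_iff {x y : ℕ → ℕ → R} {i j : ℕ} :
    signTwist x i j = signTwist y i j ↔ x i j = y i j :=
  (isUnit_neg_one.pow _).mul_right_inj

end SignTwist

section Cochains

variable {p : ℕ} {G : Type*} [Group G] [TopologicalSpace G] [IsTopologicalGroup G]

lemma d1_eq_neg_sum_cup_iff {ι : Type*} (χ : Cochain1 p G) (s : Finset ι)
    (a b : ι → Cochain1 p G) :
    d1 p χ = -∑ r ∈ s, cup p (a r) (b r) ↔
      ∀ σ τ : G, χ (σ * τ) = χ σ + χ τ + ∑ r ∈ s, a r σ * b r τ := by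
  rw [LocallyConstant.ext_iff, Prod.forall]
  refine forall₂_congr fun σ τ => ?_
  have hsum : (∑ r ∈ s, cup p (a r) (b r)) (σ, τ) = ∑ r ∈ s, cup p (a r) (b r) (σ, τ) :=
    map_sum (LocallyConstant.evalRingHom (σ, τ)) _ _
  rw [LocallyConstant.neg_apply, hsum]
  simp only [d1, cup, LocallyConstant.add_apply, LocallyConstant.sub_apply,
    LocallyConstant.mul_apply, LocallyConstant.coe_comap, Function.comp_apply,
    ContinuousMap.coe_mk]
  constructor <;> intro h <;> linear_combination -h

end Cochains

lemma forall_fin_lt_iff_forall_le {m : ℕ} {P : ℕ → ℕ → Prop} :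
    (∀ i j : Fin (m + 1), (i : ℕ) < j → P (i + 1) j) ↔
      ∀ a b : ℕ, 1 ≤ a → a ≤ b → b ≤ m → P a b := by
  refine ⟨fun h a b ha hab hb => ?_,
    fun h i j hij => h _ _ le_add_self hij (Nat.lt_succ_iff.mp j.isLt)⟩
  obtain ⟨a, rfl⟩ := Nat.exists_eq_add_of_le' ha
  exact h ⟨a, by omega⟩ ⟨b, by omega⟩ (by simp; omega)

theorem dwyer_correspondence_general (p : ℕ)
    (G : Type*) [Group G] [TopologicalSpace G] [IsTopologicalGroup G]
    (n : ℕ) (c : ℕ → ℕ → Cochain1 p G)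
    -- the associated map `γ : G → U_{n+1}(𝔽_p)`
    (γ : G → Matrix (Fin (n + 1)) (Fin (n + 1)) (ZMod p))
    (hγ : ∀ (σ : G) (i j : Fin (n + 1)), γ σ i j =
      if (i : ℕ) = (j : ℕ) then 1
      else if (i : ℕ) < (j : ℕ) then
        (-1 : ZMod p) ^ ((j : ℕ) - (i : ℕ)) * c ((i : ℕ) + 1) (j : ℕ) σ
      else 0) :
    (∀ σ τ : G, γ (σ * τ) = γ σ * γ τ) ↔
      (∀ i j : ℕ, 1 ≤ i → i ≤ j → j ≤ n →
        d1 p (c i j) = -∑ r ∈ Finset.Ico i j, cup p (c i r) (c (r + 1) j)) := by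
  let x : G → ℕ → ℕ → ZMod p := fun σ i j => c (i + 1) j σ
  have hγx : ∀ σ, γ σ = 1 + strictUpper (n + 1) (signTwist (x σ)) := fun σ => by
    ext i j
    rw [hγ, Matrix.add_apply, Matrix.one_apply]
    simp only [strictUpper, signTwist, Matrix.of_apply, x, Fin.ext_iff]
    split_ifs <;> first | rfl | omega | simp
  have hmul : ∀ σ τ, γ (σ * τ) = γ σ * γ τ ↔ ∀ i j : Fin (n + 1), (i : ℕ) < j →
      x (σ * τ) i j = (x σ + x τ + strictConv (x σ) (x τ)) i j := fun σ τ => by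
    rw [hγx, hγx, hγx, one_add_strictUpper_mul_one_add_strictUpper, strictConv_signTwist,
      ← signTwist_add, ← signTwist_add, add_right_inj, strictUpper_eq_iff]
    simp only [signTwist_apply_eq_iff]
  simp only [hmul, d1_eq_neg_sum_cup_iff, ← forall_fin_lt_iff_forall_le]
  simp only [x, strictConv, Pi.add_apply, ← Finset.Ico_add_one_left_eq_Ioo]
  exact ⟨fun h i j hij σ τ => h σ τ i j hij, fun h σ τ i j hij => h i j hij σ τ⟩

/-- Given an array `(c_{ij})` of continuous 1-cochains on a profinite
group `G` with values in `ℤ/p`, the map `γ : G → U_{n+1}(𝔽_p)` defined by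
`γ(σ)_{ij} = (−1)^{j−i} c_{i,j−1}(σ)` for `i < j` (with 1's on the diagonal) is a group
homomorphism if and only if `∂c_{ij} = −Σ_{r=i}^{j−1} c_{ir} c_{r+1,j}` for all
`1 ≤ i ≤ j ≤ n`. -/
theorem dwyer_correspondence (p : ℕ) [Fact p.Prime]
    (G : Type*) [Group G] [TopologicalSpace G] [IsTopologicalGroup G]
    [CompactSpace G] [TotallyDisconnectedSpace G] [T2Space G]
    (n : ℕ) (hn : 2 ≤ n) (c : ℕ → ℕ → Cochain1 p G)
    -- the associated map `γ : G → U_{n+1}(𝔽_p)`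
    (γ : G → Matrix (Fin (n + 1)) (Fin (n + 1)) (ZMod p))
    (hγ : ∀ (σ : G) (i j : Fin (n + 1)), γ σ i j =
      if (i : ℕ) = (j : ℕ) then 1
      else if (i : ℕ) < (j : ℕ) then
        (-1 : ZMod p) ^ ((j : ℕ) - (i : ℕ)) * c ((i : ℕ) + 1) (j : ℕ) σ
      else 0) :
    (∀ σ τ : G, γ (σ * τ) = γ σ * γ τ) ↔
      (∀ i j : ℕ, 1 ≤ i → i ≤ j → j ≤ n →
        d1 p (c i j) = -∑ r ∈ Finset.Ico i j, cup p (c i r) (c (r + 1) j)) :=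
  dwyer_correspondence_general p G n c γ hγ
end
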